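/- Let K̂^w, K̂^v ∈ C¹(𝒯) be arbitrary (approximate) kernels, and let (w̃, ṽ) be a C¹ solution of the plant with the approximated control Û(t) = −κ w̃(L,t) + ∫₀^L K̂^w(L,ξ) w̃(ξ,t) dξ + ∫₀^L K̂^v(L,ξ) ṽ(ξ,t) dξ. Define α̂(x,t) = w̃(x,t) and β̂(x,t) = ṽ(x,t) − ∫₀^x K̂^w(x,ξ) w̃(ξ,t) dξ − ∫₀^x K̂^v(x,ξ) ṽ(ξ,t) dξ. Then ∂_t α̂ + λ₁ ∂_x α̂ = 0, α̂(0,t) = −r β̂(0,t), β̂(L,t) = 0, and β̂ satisfies the perturbed transport equation ∂_t β̂ − λ₂ ∂_x β̂ = (c(x) + (λ₁+λ₂) K̂^w(x,x)) w̃(x,t) + λ₂ (K̂^w(x,0) + K̂^v(x,0)) ṽ(0,t) + ∫₀^x (λ₂ ∂_x K̂^w(x,ξ) − λ₁ ∂_ξ K̂^w(x,ξ) − c(ξ) K̂^v(x,ξ)) w̃(ξ,t) dξ + λ₂ ∫₀^x (∂_x K̂^v(x,ξ) + ∂_ξ K̂^v(x,ξ)) ṽ(ξ,t) dξ, with all perturbation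 terms given by the residuals of the approximate kernels in the kernel equations. -/

import Mathlib

/-!
Write `V[K] f (x, t) = ∫₀ˣ K(x, ξ) f(ξ, t) dξ`, so that `β̂ = ṽ − V[K̂ʷ] w̃ − V[K̂ᵛ] ṽ`. For a kernel
`K ∈ C¹(𝒯)` and a state with `f_t = μ f_x + g` in the interior, differentiating under the integral
sign in `t`, substituting the equation and integrating by parts in `ξ`, and differentiating in `x`
by the Leibniz rule give
`(∂_t − λ ∂_x) V[K] f = (μ − λ) K(x,x) f(x) − μ K(x,0) f(0) − ∫₀ˣ (λ ∂_x K + μ ∂_ξ K) f + ∫₀ˣ K g`.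
The equation for `β̂` is this identity for `(K̂ʷ, w̃)` with `μ = −λ₁` and for `(K̂ᵛ, ṽ)` with
`μ = λ₂`, `g = c w̃`, combined with `λ₁ w̃(0) = −λ₂ ṽ(0)`. The boundary conditions follow directly
from the definitions of `α̂`, `β̂` and of the control.
-/

open Set Real MeasureTheory intervalIntegral Filter Topology Metric Asymptotics
open scoped Interval NNReal

section Slices

variable {F : ℝ × ℝ → ℝ} {s : Set (ℝ × ℝ)} {I : Set ℝ} {x y : ℝ}

theorem ContDiffOn.hasDerivWithinAt_slice_fst (hF : ContDiffOn ℝ 1 F s)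
    (hI : MapsTo (fun a => (a, y)) I s) (hx : x ∈ I) :
    HasDerivWithinAt (fun a => F (a, y)) (fderivWithin ℝ F s (x, y) (1, 0)) I x :=
  (hF.differentiableOn one_ne_zero _ (hI hx)).hasFDerivWithinAt.comp_hasDerivWithinAt x
    ((hasDerivWithinAt_id x I).prodMk (hasDerivWithinAt_const x I y)) hI

theorem ContDiffOn.hasDerivWithinAt_slice_snd (hF : ContDiffOn ℝ 1 F s)
    (hI : MapsTo (fun b => (x, b)) I s) (hy : y ∈ I) :
    HasDerivWithinAt (fun b => F (x, b)) (fderivWithin ℝ F s (x, y) (0, 1)) I y :=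
  (hF.differentiableOn one_ne_zero _ (hI hy)).hasFDerivWithinAt.comp_hasDerivWithinAt y
    ((hasDerivWithinAt_const y I x).prodMk (hasDerivWithinAt_id y I)) hI

end Slices

theorem intervalIntegrable_of_eqOn_Ioo {f g : ℝ → ℝ} {a b : ℝ} (hab : a ≤ b)
    (hg : ContinuousOn g (Icc a b)) (hfg : EqOn f g (Ioo a b)) :
    IntervalIntegrable f volume a b :=
  (intervalIntegrable_congr_uIoo (uIoo_of_le hab ▸ hfg)).2 (hg.intervalIntegrable_of_Icc hab)

section Triangle

def triangle (a b : ℝ) : Set (ℝ × ℝ) := {p | a ≤ p.2 ∧ p.2 ≤ p.1 ∧ p.1 ≤ b}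

variable {a b : ℝ}

theorem convex_triangle : Convex ℝ (triangle a b) := by
  rintro ⟨x, ξ⟩ ⟨h₁, h₂, h₃⟩ ⟨y, η⟩ ⟨h₄, h₅, h₆⟩ s t hs ht hst
  dsimp only at h₁ h₂ h₃ h₄ h₅ h₆
  obtain rfl : t = 1 - s := by linarith
  refine ⟨?_, ?_, ?_⟩ <;> simp only [Prod.smul_mk, Prod.mk_add_mk, smul_eq_mul] <;>
    nlinarith [mul_le_mul_of_nonneg_left h₁ hs, mul_le_mul_of_nonneg_left h₂ hs,
      mul_le_mul_of_nonneg_left h₃ hs, mul_le_mul_of_nonneg_left h₄ ht,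
      mul_le_mul_of_nonneg_left h₅ ht, mul_le_mul_of_nonneg_left h₆ ht]

theorem isCompact_triangle : IsCompact (triangle a b) :=
  (isCompact_Icc.prod isCompact_Icc).of_isClosed_subset
    ((isClosed_le continuous_const continuous_snd).inter
      ((isClosed_le continuous_snd continuous_fst).inter (isClosed_le continuous_fst continuous_const)))
    fun _ ⟨h₁, h₂, h₃⟩ => ⟨⟨h₁.trans h₂, h₃⟩, h₁, h₂.trans h₃⟩

theorem triangle_mem_nhds {x ξ : ℝ} (h₁ : a < ξ) (h₂ : ξ < x) (h₃ : x < b) :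
    triangle a b ∈ 𝓝 (x, ξ) := by
  have hx := (continuous_fst (X := ℝ) (Y := ℝ)).tendsto (x, ξ)
  have hξ := (continuous_snd (X := ℝ) (Y := ℝ)).tendsto (x, ξ)
  filter_upwards [tendsto_const_nhds.eventually_lt hξ h₁, hξ.eventually_lt hx h₂,
    hx.eventually_lt tendsto_const_nhds h₃] with p hp₁ hp₂ hp₃
  exact ⟨hp₁.le, hp₂.le, hp₃.le⟩

theorem uniqueDiffOn_triangle (hab : a < b) : UniqueDiffOn ℝ (triangle a b) :=
  uniqueDiffOn_convex convex_triangle ⟨((a + 2 * b) / 3, (2 * a + b) / 3),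
    mem_interior_iff_mem_nhds.2 (triangle_mem_nhds (by linarith) (by linarith) (by linarith))⟩

variable {k : ℝ → ℝ → ℝ} {x : ℝ}

theorem ContDiffOn.intervalIntegrable_deriv_fst_triangle
    (hk : ContDiffOn ℝ 1 (fun p : ℝ × ℝ => k p.1 p.2) (triangle a b)) (hx : x ∈ Ioo a b) :
    IntervalIntegrable (fun ξ => deriv (fun y => k y ξ) x) volume a x := by
  refine intervalIntegrable_of_eqOn_Ioo hx.1.le (g := fun ξ =>
    fderivWithin ℝ (fun p : ℝ × ℝ => k p.1 p.2) (triangle a b) (x, ξ) (1, 0)) ?_ fun ξ hξ => ?_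
  · exact ((hk.continuousOn_fderivWithin (uniqueDiffOn_triangle (hx.1.trans hx.2)) le_rfl).comp
      (continuous_const.prodMk continuous_id).continuousOn
      fun ξ hξ => ⟨hξ.1, hξ.2, hx.2.le⟩).clm_apply continuousOn_const
  · exact ((hk.hasDerivWithinAt_slice_fst (I := Ioo ξ b) (fun y hy => ⟨hξ.1.le, hy.1.le, hy.2.le⟩)
      ⟨hξ.2, hx.2⟩).hasDerivAt (Ioo_mem_nhds hξ.2 hx.2)).deriv

theorem ContDiffOn.intervalIntegrable_deriv_snd_triangle
    (hk : ContDiffOn ℝ 1 (fun p : ℝ × ℝ => k p.1 p.2) (triangle a b)) (hx : x ∈ Ioo a b) :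
    IntervalIntegrable (fun ξ => deriv (fun η => k x η) ξ) volume a x := by
  refine intervalIntegrable_of_eqOn_Ioo hx.1.le (g := fun ξ =>
    fderivWithin ℝ (fun p : ℝ × ℝ => k p.1 p.2) (triangle a b) (x, ξ) (0, 1)) ?_ fun ξ hξ => ?_
  · exact ((hk.continuousOn_fderivWithin (uniqueDiffOn_triangle (hx.1.trans hx.2)) le_rfl).comp
      (continuous_const.prodMk continuous_id).continuousOn
      fun ξ hξ => ⟨hξ.1, hξ.2, hx.2.le⟩).clm_apply continuousOn_const
  · exact ((hk.hasDerivWithinAt_slice_snd (I := Ioo a x) (fun η hη => ⟨hη.1.le, hη.2.le, hx.2.le⟩)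
      hξ).hasDerivAt (Ioo_mem_nhds hξ.1 hξ.2)).deriv

end Triangle

section ParametricIntegral

variable {F : ℝ → ℝ → ℝ} {a b t₀ : ℝ}

theorem hasDerivAt_intervalIntegral_of_continuousOn {F' : ℝ → ℝ → ℝ} {ε : ℝ}
    (hab : a ≤ b) (hε : 0 < ε)
    (hF : ContinuousOn (fun p : ℝ × ℝ => F p.1 p.2) (Icc a b ×ˢ closedBall t₀ ε))
    (hF' : ContinuousOn (fun p : ℝ × ℝ => F' p.1 p.2) (Icc a b ×ˢ closedBall t₀ ε))
    (hderiv : ∀ ξ ∈ Ioo a b, ∀ t ∈ ball t₀ ε, HasDerivAt (F ξ) (F' ξ t) t) :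
    HasDerivAt (fun t => ∫ ξ in a..b, F ξ t) (∫ ξ in a..b, F' ξ t₀) t₀ := by
  obtain ⟨C, hC⟩ :=
    (isCompact_Icc.prod (isCompact_closedBall t₀ ε)).exists_bound_of_continuousOn hF'
  have hmeas : ∀ G : ℝ → ℝ → ℝ,
      ContinuousOn (fun p : ℝ × ℝ => G p.1 p.2) (Icc a b ×ˢ closedBall t₀ ε) →
      ∀ t ∈ closedBall t₀ ε, AEStronglyMeasurable (fun ξ => G ξ t) (volume.restrict (Ι a b)) :=
    fun G hG t ht => ((hG.comp (continuous_id.prodMk continuous_const).continuousOn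
      fun ξ hξ => ⟨hξ, ht⟩).mono (uIoc_of_le hab ▸ Ioc_subset_Icc_self)).aestronglyMeasurable
      measurableSet_uIoc
  have ht₀ : t₀ ∈ closedBall t₀ ε := mem_closedBall_self hε.le
  refine (hasDerivAt_integral_of_dominated_loc_of_deriv_le (F := fun t ξ => F ξ t)
    (F' := fun t ξ => F' ξ t) (bound := fun _ => C) (ball_mem_nhds t₀ hε) ?_ ?_
    (hmeas F' hF' t₀ ht₀) ?_ intervalIntegrable_const ?_).2
  · filter_upwards [ball_mem_nhds t₀ hε] with t ht using hmeas F hF t (ball_subset_closedBall ht)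
  · exact (hF.comp (continuous_id.prodMk continuous_const).continuousOn
      fun ξ hξ => ⟨hξ, ht₀⟩).intervalIntegrable_of_Icc hab
  · refine ae_of_all _ fun ξ hξ t ht => hC (ξ, t) ⟨?_, ball_subset_closedBall ht⟩
    exact Ioc_subset_Icc_self (uIoc_of_le hab ▸ hξ)
  · filter_upwards [volume.ae_ne b] with ξ hξb hξ t ht
    rw [uIoc_of_le hab] at hξ
    exact hderiv ξ ⟨hξ.1, hξ.2.lt_of_ne hξb⟩ t ht

theorem hasDerivAt_intervalIntegral_of_contDiffOn {s : Set ℝ} (hab : a < b) (hs : IsOpen s)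
    (ht₀ : t₀ ∈ s) (hF : ContDiffOn ℝ 1 (fun p : ℝ × ℝ => F p.1 p.2) (Icc a b ×ˢ s)) :
    HasDerivAt (fun t => ∫ ξ in a..b, F ξ t) (∫ ξ in a..b, deriv (F ξ) t₀) t₀ := by
  set F' : ℝ → ℝ → ℝ := fun ξ t =>
    fderivWithin ℝ (fun p : ℝ × ℝ => F p.1 p.2) (Icc a b ×ˢ s) (ξ, t) (0, 1)
  have hderiv : ∀ ξ ∈ Icc a b, ∀ t ∈ s, HasDerivAt (F ξ) (F' ξ t) t := fun ξ hξ t ht =>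
    (hF.hasDerivWithinAt_slice_snd (fun _ h => ⟨hξ, h⟩) ht).hasDerivAt (hs.mem_nhds ht)
  obtain ⟨ε, hε, hεs⟩ := nhds_basis_closedBall.mem_iff.1 (hs.mem_nhds ht₀)
  have hsub : Icc a b ×ˢ closedBall t₀ ε ⊆ Icc a b ×ˢ s := prod_mono subset_rfl hεs
  have hF'c : ContinuousOn (fun p : ℝ × ℝ => F' p.1 p.2) (Icc a b ×ˢ s) :=
    (hF.continuousOn_fderivWithin ((uniqueDiffOn_Icc hab).prod hs.uniqueDiffOn) le_rfl).clm_apply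
      continuousOn_const
  rw [integral_congr fun ξ hξ => (hderiv ξ (uIcc_of_le hab.le ▸ hξ) t₀ ht₀).deriv]
  exact hasDerivAt_intervalIntegral_of_continuousOn hab.le hε (hF.continuousOn.mono hsub)
    (hF'c.mono hsub) fun ξ hξ t ht =>
      hderiv ξ (Ioo_subset_Icc_self hξ) t (hεs (ball_subset_closedBall ht))

end ParametricIntegral

section Leibniz

variable {k : ℝ → ℝ → ℝ} {a b : ℝ}

/- A kernel `k` given only on `triangle a b` is extended past the diagonal by freezing `x` there.
The extension is Lipschitz in `x` uniformly in `ξ`, which is what the Leibniz rule below needs: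
it allows differentiation under the integral sign in `x`, and it makes the contribution of the
moving endpoint quadratic. -/
def diagonalExtension (k : ℝ → ℝ → ℝ) (x ξ : ℝ) : ℝ := k (max x ξ) ξ

theorem diagonalExtension_of_le {x ξ : ℝ} (h : ξ ≤ x) : diagonalExtension k x ξ = k x ξ := by
  rw [diagonalExtension, max_eq_left h]

theorem continuousOn_diagonalExtension
    (hk : ContinuousOn (fun p : ℝ × ℝ => k p.1 p.2) (triangle a b)) {x : ℝ} (hx : x ≤ b) :
    ContinuousOn (diagonalExtension k x) (Icc a b) :=
  hk.comp ((continuous_const.max continuous_id).prodMk continuous_id).continuousOn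
    fun _ hξ => ⟨hξ.1, le_max_right _ _, max_le hx hξ.2⟩

theorem intervalIntegrable_diagonalExtension
    (hk : ContinuousOn (fun p : ℝ × ℝ => k p.1 p.2) (triangle a b)) {x c d : ℝ}
    (hx : x ∈ Icc a b) (hc : c ∈ Icc a b) (hd : d ∈ Icc a b) :
    IntervalIntegrable (diagonalExtension k x) volume c d :=
  ((continuousOn_diagonalExtension hk hx.2).mono (uIcc_subset_Icc hc hd)).intervalIntegrable

theorem exists_lipschitzOnWith_diagonalExtension (hab : a < b)
    (hk : ContDiffOn ℝ 1 (fun p : ℝ × ℝ => k p.1 p.2) (triangle a b)) :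
    ∃ C : ℝ≥0, ∀ ξ ∈ Icc a b, LipschitzOnWith C (fun x => diagonalExtension k x ξ) (Iic b) := by
  obtain ⟨C, hC⟩ := isCompact_triangle.exists_bound_of_continuousOn
    ((hk.continuousOn_fderivWithin (uniqueDiffOn_triangle hab) le_rfl).clm_apply
      (continuousOn_const (c := ((1 : ℝ), (0 : ℝ)))))
  refine ⟨C.toNNReal, fun ξ hξ => ?_⟩
  have hslice : LipschitzOnWith C.toNNReal (fun y => k y ξ) (Icc ξ b) :=
    (convex_Icc ξ b).lipschitzOnWith_of_nnnorm_hasDerivWithin_le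
      (fun y hy => hk.hasDerivWithinAt_slice_fst (fun z hz => ⟨hξ.1, hz.1, hz.2⟩) hy)
      fun y hy => by
        rw [← NNReal.coe_le_coe, coe_nnnorm, Real.coe_toNNReal']
        exact (hC _ ⟨hξ.1, hy.1, hy.2⟩).trans (le_max_left _ _)
  have h := hslice.comp (LipschitzWith.id.max_const ξ).lipschitzOnWith
    fun y (hy : y ≤ b) => ⟨le_max_right _ _, max_le hy hξ.2⟩
  rwa [mul_one] at h

theorem hasDerivAt_integral_diagonalExtension_param
    (hk : ContDiffOn ℝ 1 (fun p : ℝ × ℝ => k p.1 p.2) (triangle a b)) {x₀ : ℝ}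
    (hx₀ : x₀ ∈ Ioo a b) :
    HasDerivAt (fun x => ∫ ξ in a..x₀, diagonalExtension k x ξ)
      (∫ ξ in a..x₀, deriv (fun y => k y ξ) x₀) x₀ := by
  obtain ⟨hax, hxb⟩ := hx₀
  obtain ⟨C, hC⟩ := exists_lipschitzOnWith_diagonalExtension (hax.trans hxb) hk
  have ha : a ∈ Icc a b := ⟨le_rfl, (hax.trans hxb).le⟩
  have hx₀ : x₀ ∈ Icc a b := ⟨hax.le, hxb.le⟩
  have hnhds : Icc a b ∈ 𝓝 x₀ := Icc_mem_nhds hax hxb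
  refine (hasDerivAt_integral_of_dominated_loc_of_lip (bound := fun _ => (C : ℝ)) hnhds ?_
    (intervalIntegrable_diagonalExtension hk.continuousOn hx₀ ha hx₀)
    (hk.intervalIntegrable_deriv_fst_triangle ⟨hax, hxb⟩).def'.aestronglyMeasurable ?_
    intervalIntegrable_const ?_).2
  · filter_upwards [hnhds] with x hx using
      (intervalIntegrable_diagonalExtension hk.continuousOn hx ha hx₀).def'.aestronglyMeasurable
  · refine ae_of_all _ fun ξ hξ => ?_
    rw [uIoc_of_le hax.le] at hξ
    rw [Real.nnabs_coe]
    exact (hC ξ ⟨hξ.1.le, hξ.2.trans hxb.le⟩).mono Icc_subset_Iic_self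
  · filter_upwards [volume.ae_ne x₀] with ξ hξx₀ hξ
    rw [uIoc_of_le hax.le] at hξ
    have hξ' : ξ < x₀ := hξ.2.lt_of_ne hξx₀
    have h := (hk.hasDerivWithinAt_slice_fst (I := Ioo ξ b)
      (fun y hy => ⟨hξ.1.le, hy.1.le, hy.2.le⟩) ⟨hξ', hxb⟩).hasDerivAt (Ioo_mem_nhds hξ' hxb)
    rw [h.deriv]
    exact h.congr_of_eventuallyEq
      ((eventually_gt_nhds hξ').mono fun y hy => diagonalExtension_of_le hy.le)

theorem hasDerivAt_integral_diagonalExtension_sub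
    (hk : ContDiffOn ℝ 1 (fun p : ℝ × ℝ => k p.1 p.2) (triangle a b)) {x₀ : ℝ}
    (hx₀ : x₀ ∈ Ioo a b) :
    HasDerivAt (fun x => ∫ ξ in x₀..x, (diagonalExtension k x ξ - diagonalExtension k x₀ ξ))
      0 x₀ := by
  obtain ⟨C, hC⟩ := exists_lipschitzOnWith_diagonalExtension (hx₀.1.trans hx₀.2) hk
  have hbig : (fun x => ∫ ξ in x₀..x, (diagonalExtension k x ξ - diagonalExtension k x₀ ξ))
      =O[𝓝 x₀] fun x => ‖x - x₀‖ ^ 2 := by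
    refine IsBigO.of_bound C ?_
    filter_upwards [Icc_mem_nhds hx₀.1 hx₀.2] with x hx
    have hx₀' : x₀ ∈ Icc a b := Ioo_subset_Icc_self hx₀
    calc ‖∫ ξ in x₀..x, (diagonalExtension k x ξ - diagonalExtension k x₀ ξ)‖
        ≤ C * |x - x₀| * |x - x₀| := norm_integral_le_of_norm_le_const fun ξ hξ => by
          simpa [Real.dist_eq] using (hC ξ (uIcc_subset_Icc hx₀' hx (uIoc_subset_uIcc hξ))).dist_le_mul
            x hx.2 x₀ hx₀'.2
      _ = C * ‖‖x - x₀‖ ^ 2‖ := by simp [sq, mul_assoc]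
  simpa using (hbig.hasFDerivAt one_lt_two).hasDerivAt

theorem hasDerivAt_intervalIntegral_triangle
    (hk : ContDiffOn ℝ 1 (fun p : ℝ × ℝ => k p.1 p.2) (triangle a b)) {x₀ : ℝ}
    (hx₀ : x₀ ∈ Ioo a b) :
    HasDerivAt (fun x => ∫ ξ in a..x, k x ξ)
      (k x₀ x₀ + ∫ ξ in a..x₀, deriv (fun y => k y ξ) x₀) x₀ := by
  set E := diagonalExtension k
  have hint : ∀ {x c d}, x ∈ Icc a b → c ∈ Icc a b → d ∈ Icc a b →
      IntervalIntegrable (E x) volume c d := intervalIntegrable_diagonalExtension hk.continuousOn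
  have ha : a ∈ Icc a b := ⟨le_rfl, (hx₀.1.trans hx₀.2).le⟩
  have hx₀' : x₀ ∈ Icc a b := Ioo_subset_Icc_self hx₀
  have hnhds : Icc a b ∈ 𝓝 x₀ := Icc_mem_nhds hx₀.1 hx₀.2
  have hE : ContinuousOn (E x₀) (Icc a b) := continuousOn_diagonalExtension hk.continuousOn hx₀'.2
  have hendpoint : HasDerivAt (fun x => ∫ ξ in x₀..x, E x₀ ξ) (k x₀ x₀) x₀ := by
    have h := integral_hasDerivAt_right (hint hx₀' hx₀' hx₀')
      ((hE.mono Ioo_subset_Icc_self).stronglyMeasurableAtFilter isOpen_Ioo x₀ hx₀)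
      (hE.continuousAt hnhds)
    rwa [show E x₀ x₀ = k x₀ x₀ from diagonalExtension_of_le le_rfl] at h
  have hsplit : (fun x => ∫ ξ in a..x, k x ξ) =ᶠ[𝓝 x₀] fun x =>
      (∫ ξ in a..x₀, E x ξ) + (∫ ξ in x₀..x, E x₀ ξ) + ∫ ξ in x₀..x, (E x ξ - E x₀ ξ) := by
    filter_upwards [hnhds] with x hx
    have hkE : ∫ ξ in a..x, k x ξ = ∫ ξ in a..x, E x ξ :=
      integral_congr fun ξ hξ => (diagonalExtension_of_le (uIcc_of_le hx.1 ▸ hξ).2).symm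
    rw [integral_sub (hint hx hx₀' hx) (hint hx₀' hx₀' hx), hkE,
      ← integral_add_adjacent_intervals (hint hx ha hx₀') (hint hx hx₀' hx)]
    ring
  simpa only [add_zero, add_comm (k x₀ x₀)] using
    (((hasDerivAt_integral_diagonalExtension_param hk hx₀).add hendpoint).add
      (hasDerivAt_integral_diagonalExtension_sub hk hx₀)).congr_of_eventuallyEq hsplit

end Leibniz

section Volterra

noncomputable def volterra (K f : ℝ → ℝ → ℝ) (x t : ℝ) : ℝ := ∫ ξ in (0 : ℝ)..x, K x ξ * f ξ t

variable {L x₀ t₀ : ℝ} {K f : ℝ → ℝ → ℝ}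

theorem continuousOn_kernel_slice
    (hK : ContinuousOn (fun p : ℝ × ℝ => K p.1 p.2) (triangle 0 L)) (hx₀ : x₀ ∈ Icc 0 L) :
    ContinuousOn (fun ξ => K x₀ ξ) [[0, x₀]] :=
  hK.comp (continuous_const.prodMk continuous_id).continuousOn
    fun _ hξ => ⟨(uIcc_of_le hx₀.1 ▸ hξ).1, (uIcc_of_le hx₀.1 ▸ hξ).2, hx₀.2⟩

theorem continuousOn_state_slice
    (hf : ContinuousOn (fun p : ℝ × ℝ => f p.1 p.2) (Icc 0 L ×ˢ Ici 0)) (hx₀ : x₀ ∈ Icc 0 L)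
    (ht₀ : 0 ≤ t₀) : ContinuousOn (fun ξ => f ξ t₀) [[0, x₀]] :=
  hf.comp (continuous_id.prodMk continuous_const).continuousOn
    fun _ hξ => ⟨uIcc_subset_Icc ⟨le_rfl, hx₀.1.trans hx₀.2⟩ hx₀ hξ, ht₀⟩

theorem hasDerivAt_volterra_time
    (hK : ContDiffOn ℝ 1 (fun p : ℝ × ℝ => K p.1 p.2) (triangle 0 L))
    (hf : ContDiffOn ℝ 1 (fun p : ℝ × ℝ => f p.1 p.2) (Icc 0 L ×ˢ Ici 0))
    (hx₀ : x₀ ∈ Ioo 0 L) (ht₀ : 0 < t₀) :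
    HasDerivAt (fun t => volterra K f x₀ t)
      (∫ ξ in (0 : ℝ)..x₀, K x₀ ξ * deriv (fun s => f ξ s) t₀) t₀ := by
  have hF : ContDiffOn ℝ 1 (fun p : ℝ × ℝ => K x₀ p.1 * f p.1 p.2) (Icc 0 x₀ ×ˢ Ioi 0) :=
    (hK.comp (contDiff_const.prodMk contDiff_fst).contDiffOn
      fun p hp => ⟨hp.1.1, hp.1.2, hx₀.2.le⟩).mul
      (hf.mono (prod_mono (Icc_subset_Icc_right hx₀.2.le) Ioi_subset_Ici_self))
  have h := hasDerivAt_intervalIntegral_of_contDiffOn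
    (F := fun ξ t => K x₀ ξ * f ξ t) hx₀.1 isOpen_Ioi ht₀ hF
  simp only [deriv_const_mul_field] at h
  exact h

theorem hasDerivAt_volterra_space
    (hK : ContDiffOn ℝ 1 (fun p : ℝ × ℝ => K p.1 p.2) (triangle 0 L))
    (hf : ContDiffOn ℝ 1 (fun p : ℝ × ℝ => f p.1 p.2) (Icc 0 L ×ˢ Ici 0))
    (hx₀ : x₀ ∈ Ioo 0 L) (ht₀ : 0 ≤ t₀) :
    HasDerivAt (fun x => volterra K f x t₀)
      (K x₀ x₀ * f x₀ t₀ + ∫ ξ in (0 : ℝ)..x₀, deriv (fun y => K y ξ) x₀ * f ξ t₀) x₀ := by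
  have hk : ContDiffOn ℝ 1 (fun p : ℝ × ℝ => K p.1 p.2 * f p.2 t₀) (triangle 0 L) :=
    hK.mul (hf.comp (contDiff_snd.prodMk contDiff_const).contDiffOn
      fun p hp => ⟨⟨hp.1, hp.2.1.trans hp.2.2⟩, ht₀⟩)
  have h := hasDerivAt_intervalIntegral_triangle (k := fun x ξ => K x ξ * f ξ t₀) hk hx₀
  simp only [deriv_mul_const_field] at h
  exact h

theorem ContDiffOn.intervalIntegrable_deriv_fst_rectangle
    (hf : ContDiffOn ℝ 1 (fun p : ℝ × ℝ => f p.1 p.2) (Icc 0 L ×ˢ Ici 0))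
    (hx₀ : x₀ ∈ Ioo 0 L) (ht₀ : 0 ≤ t₀) :
    IntervalIntegrable (fun ξ => deriv (fun y => f y t₀) ξ) volume 0 x₀ := by
  have hL : 0 < L := hx₀.1.trans hx₀.2
  refine intervalIntegrable_of_eqOn_Ioo hx₀.1.le (g := fun ξ =>
    fderivWithin ℝ (fun p : ℝ × ℝ => f p.1 p.2) (Icc 0 L ×ˢ Ici 0) (ξ, t₀) (1, 0)) ?_
    fun ξ hξ => ?_
  · exact ((hf.continuousOn_fderivWithin ((uniqueDiffOn_Icc hL).prod (uniqueDiffOn_Ici 0))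
      le_rfl).comp (continuous_id.prodMk continuous_const).continuousOn
      fun ξ hξ => ⟨⟨hξ.1, hξ.2.trans hx₀.2.le⟩, ht₀⟩).clm_apply continuousOn_const
  · exact ((hf.hasDerivWithinAt_slice_fst (fun y hy => ⟨hy, ht₀⟩)
      ⟨hξ.1.le, hξ.2.le.trans hx₀.2.le⟩).hasDerivAt
      (Icc_mem_nhds hξ.1 (hξ.2.trans hx₀.2))).deriv

theorem volterra_transport
    (hK : ContDiffOn ℝ 1 (fun p : ℝ × ℝ => K p.1 p.2) (triangle 0 L))
    (hf : ContDiffOn ℝ 1 (fun p : ℝ × ℝ => f p.1 p.2) (Icc 0 L ×ˢ Ici 0))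
    (hx₀ : x₀ ∈ Ioo 0 L) (ht₀ : 0 < t₀) {c₁ c₂ : ℝ} {g : ℝ → ℝ} (hg : ContinuousOn g [[0, x₀]])
    (hpde : ∀ ξ ∈ Ioo 0 x₀, deriv (fun s => f ξ s) t₀ = c₂ * deriv (fun y => f y t₀) ξ + g ξ) :
    deriv (fun t => volterra K f x₀ t) t₀ - c₁ * deriv (fun x => volterra K f x t₀) x₀
      = (c₂ - c₁) * K x₀ x₀ * f x₀ t₀ - c₂ * K x₀ 0 * f 0 t₀
        - (∫ ξ in (0 : ℝ)..x₀,
            (c₁ * deriv (fun y => K y ξ) x₀ + c₂ * deriv (fun η => K x₀ η) ξ) * f ξ t₀)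
        + ∫ ξ in (0 : ℝ)..x₀, K x₀ ξ * g ξ := by
  have hKc := continuousOn_kernel_slice hK.continuousOn (Ioo_subset_Icc_self hx₀)
  have hfc := continuousOn_state_slice hf.continuousOn (Ioo_subset_Icc_self hx₀) ht₀.le
  have hfx := hf.intervalIntegrable_deriv_fst_rectangle hx₀ ht₀.le
  have hK₁ := hK.intervalIntegrable_deriv_fst_triangle hx₀
  have hK₂ := hK.intervalIntegrable_deriv_snd_triangle hx₀
  have hibp : ∫ ξ in (0 : ℝ)..x₀, K x₀ ξ * deriv (fun y => f y t₀) ξ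
      = K x₀ x₀ * f x₀ t₀ - K x₀ 0 * f 0 t₀
        - ∫ ξ in (0 : ℝ)..x₀, deriv (fun η => K x₀ η) ξ * f ξ t₀ := by
    refine integral_mul_deriv_eq_deriv_mul_of_hasDerivAt hKc hfc (fun ξ hξ => ?_)
      (fun ξ hξ => ?_) hK₂ hfx
    · rw [min_eq_left hx₀.1.le, max_eq_right hx₀.1.le] at hξ
      exact ((hK.hasDerivWithinAt_slice_snd (I := Ioo 0 x₀)
        (fun η hη => ⟨hη.1.le, hη.2.le, hx₀.2.le⟩) hξ).hasDerivAt
        (Ioo_mem_nhds hξ.1 hξ.2)).differentiableAt.hasDerivAt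
    · rw [min_eq_left hx₀.1.le, max_eq_right hx₀.1.le] at hξ
      exact ((hf.hasDerivWithinAt_slice_fst (fun y hy => ⟨hy, ht₀.le⟩)
        ⟨hξ.1.le, hξ.2.le.trans hx₀.2.le⟩).hasDerivAt
        (Icc_mem_nhds hξ.1 (hξ.2.trans hx₀.2))).differentiableAt.hasDerivAt
  have htime : ∫ ξ in (0 : ℝ)..x₀, K x₀ ξ * deriv (fun s => f ξ s) t₀
      = c₂ * (∫ ξ in (0 : ℝ)..x₀, K x₀ ξ * deriv (fun y => f y t₀) ξ)
        + ∫ ξ in (0 : ℝ)..x₀, K x₀ ξ * g ξ := by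
    rw [integral_congr_Ioo_of_le hx₀.1.le fun ξ hξ => by rw [hpde ξ hξ],
      ← intervalIntegral.integral_const_mul, ← integral_add ((hfx.continuousOn_mul hKc).const_mul c₂)
        (hg.intervalIntegrable.continuousOn_mul hKc)]
    exact integral_congr fun ξ _ => by ring
  have hsplit : ∫ ξ in (0 : ℝ)..x₀,
        (c₁ * deriv (fun y => K y ξ) x₀ + c₂ * deriv (fun η => K x₀ η) ξ) * f ξ t₀
      = c₁ * (∫ ξ in (0 : ℝ)..x₀, deriv (fun y => K y ξ) x₀ * f ξ t₀)
        + c₂ * ∫ ξ in (0 : ℝ)..x₀, deriv (fun η => K x₀ η) ξ * f ξ t₀ := by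
    rw [← intervalIntegral.integral_const_mul, ← intervalIntegral.integral_const_mul, ← integral_add
      ((hK₁.mul_continuousOn hfc).const_mul c₁) ((hK₂.mul_continuousOn hfc).const_mul c₂)]
    exact integral_congr fun ξ _ => by ring
  rw [(hasDerivAt_volterra_time hK hf hx₀ ht₀).deriv,
    (hasDerivAt_volterra_space hK hf hx₀ ht₀.le).deriv, htime, hibp, hsplit]
  ring

theorem transport_sub_volterra {K₁ K₂ w v : ℝ → ℝ → ℝ}
    (hK₁ : ContDiffOn ℝ 1 (fun p : ℝ × ℝ => K₁ p.1 p.2) (triangle 0 L))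
    (hK₂ : ContDiffOn ℝ 1 (fun p : ℝ × ℝ => K₂ p.1 p.2) (triangle 0 L))
    (hw : ContDiffOn ℝ 1 (fun p : ℝ × ℝ => w p.1 p.2) (Icc 0 L ×ˢ Ici 0))
    (hv : ContDiffOn ℝ 1 (fun p : ℝ × ℝ => v p.1 p.2) (Icc 0 L ×ˢ Ici 0))
    (hx₀ : x₀ ∈ Ioo 0 L) (ht₀ : 0 < t₀) (c : ℝ) :
    deriv (fun t => v x₀ t - volterra K₁ w x₀ t - volterra K₂ v x₀ t) t₀
        - c * deriv (fun x => v x t₀ - volterra K₁ w x t₀ - volterra K₂ v x t₀) x₀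
      = (deriv (fun t => v x₀ t) t₀ - c * deriv (fun x => v x t₀) x₀)
        - (deriv (fun t => volterra K₁ w x₀ t) t₀ - c * deriv (fun x => volterra K₁ w x t₀) x₀)
        - (deriv (fun t => volterra K₂ v x₀ t) t₀ - c * deriv (fun x => volterra K₂ v x t₀) x₀) := by
  have hvt : DifferentiableAt ℝ (fun t => v x₀ t) t₀ :=
    ((hv.hasDerivWithinAt_slice_snd (fun s (hs : 0 < s) => ⟨Ioo_subset_Icc_self hx₀, hs.le⟩)
      ht₀).hasDerivAt (Ioi_mem_nhds ht₀)).differentiableAt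
  have hvx : DifferentiableAt ℝ (fun x => v x t₀) x₀ :=
    ((hv.hasDerivWithinAt_slice_fst (fun y hy => ⟨hy, ht₀.le⟩) (Ioo_subset_Icc_self hx₀)).hasDerivAt
      (Icc_mem_nhds hx₀.1 hx₀.2)).differentiableAt
  have hT₁t := (hasDerivAt_volterra_time hK₁ hw hx₀ ht₀).differentiableAt
  have hT₂t := (hasDerivAt_volterra_time hK₂ hv hx₀ ht₀).differentiableAt
  have hT₁x := (hasDerivAt_volterra_space hK₁ hw hx₀ ht₀.le).differentiableAt
  have hT₂x := (hasDerivAt_volterra_space hK₂ hv hx₀ ht₀.le).differentiableAt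
  rw [deriv_fun_sub (hvt.fun_sub hT₁t) hT₂t, deriv_fun_sub hvt hT₁t,
    deriv_fun_sub (hvx.fun_sub hT₁x) hT₂x, deriv_fun_sub hvx hT₁x]
  ring

end Volterra

theorem stmt_4_general (L lam1 lam2 τ vs : ℝ)
    (h1 : 0 < lam1)
    -- the approximate kernels, C¹ on the triangle 𝒯
    (Khw Khv : ℝ → ℝ → ℝ)
    (hKhwC1 : ContDiffOn ℝ 1 (fun p : ℝ × ℝ => Khw p.1 p.2)
      {p : ℝ × ℝ | 0 ≤ p.2 ∧ p.2 ≤ p.1 ∧ p.1 ≤ L})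
    (hKhvC1 : ContDiffOn ℝ 1 (fun p : ℝ × ℝ => Khv p.1 p.2)
      {p : ℝ × ℝ | 0 ≤ p.2 ∧ p.2 ≤ p.1 ∧ p.1 ≤ L})
    -- a C¹ solution (w̃, ṽ) of the plant with the approximated control
    (w v : ℝ → ℝ → ℝ) (U : ℝ → ℝ)
    (hwC1 : ContDiffOn ℝ 1 (fun p : ℝ × ℝ => w p.1 p.2) (Icc 0 L ×ˢ Ici 0))
    (hvC1 : ContDiffOn ℝ 1 (fun p : ℝ × ℝ => v p.1 p.2) (Icc 0 L ×ˢ Ici 0))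
    (hwpde : ∀ x ∈ Ioo (0:ℝ) L, ∀ t ∈ Ioi (0:ℝ),
      deriv (fun s => w x s) t + lam1 * deriv (fun y => w y t) x = 0)
    (hvpde : ∀ x ∈ Ioo (0:ℝ) L, ∀ t ∈ Ioi (0:ℝ),
      deriv (fun s => v x s) t - lam2 * deriv (fun y => v y t) x
        = (-(1 / τ) * Real.exp (-x / (τ * vs))) * w x t)
    (hbc0 : ∀ t : ℝ, 0 ≤ t → w 0 t = -(lam2 / lam1) * v 0 t)
    (hbcL : ∀ t : ℝ, 0 ≤ t →
      v L t = Real.exp (-L / (τ * vs)) * w L t + U t)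
    (hU : ∀ t : ℝ, 0 ≤ t →
      U t = -Real.exp (-L / (τ * vs)) * w L t
        + (∫ ξ in (0:ℝ)..L, Khw L ξ * w ξ t)
        + ∫ ξ in (0:ℝ)..L, Khv L ξ * v ξ t)
    -- the transformed states
    (αh βh : ℝ → ℝ → ℝ)
    (hαdef : ∀ x t : ℝ, αh x t = w x t)
    (hβdef : ∀ x t : ℝ, βh x t = v x t
      - (∫ ξ in (0:ℝ)..x, Khw x ξ * w ξ t)
      - ∫ ξ in (0:ℝ)..x, Khv x ξ * v ξ t) :
    (∀ x ∈ Ioo (0:ℝ) L, ∀ t ∈ Ioi (0:ℝ),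
      deriv (fun s => αh x s) t + lam1 * deriv (fun y => αh y t) x = 0) ∧
    (∀ t : ℝ, 0 ≤ t → αh 0 t = -(lam2 / lam1) * βh 0 t) ∧
    (∀ t : ℝ, 0 ≤ t → βh L t = 0) ∧
    (∀ x ∈ Ioo (0:ℝ) L, ∀ t ∈ Ioi (0:ℝ),
      deriv (fun s => βh x s) t - lam2 * deriv (fun y => βh y t) x
        = ((-(1 / τ) * Real.exp (-x / (τ * vs))) + (lam1 + lam2) * Khw x x) * w x t
          + lam2 * (Khw x 0 + Khv x 0) * v 0 t
          + (∫ ξ in (0:ℝ)..x,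
              (lam2 * deriv (fun y => Khw y ξ) x - lam1 * deriv (fun s => Khw x s) ξ
                - (-(1 / τ) * Real.exp (-ξ / (τ * vs))) * Khv x ξ) * w ξ t)
          + lam2 * ∫ ξ in (0:ℝ)..x,
              (deriv (fun y => Khv y ξ) x + deriv (fun s => Khv x s) ξ) * v ξ t) := by
  have hβ : ∀ x t, βh x t = v x t - volterra Khw w x t - volterra Khv v x t := hβdef
  refine ⟨fun x hx t ht => ?_, fun t ht => ?_, fun t ht => ?_, fun x hx t (ht : 0 < t) => ?_⟩
  · simpa only [hαdef] using hwpde x hx t ht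
  · simp [hαdef, hβ, volterra, hbc0 t ht]
  · rw [hβ, volterra, volterra, hbcL t ht, hU t ht]
    ring
  simp only [hβ]
  rw [transport_sub_volterra hKhwC1 hKhvC1 hwC1 hvC1 hx ht lam2]
  set c : ℝ → ℝ := fun ξ => -(1 / τ) * Real.exp (-ξ / (τ * vs))
  have hwc := continuousOn_state_slice hwC1.continuousOn (Ioo_subset_Icc_self hx) ht.le
  have hcw : ContinuousOn (fun ξ => c ξ * w ξ t) [[0, x]] :=
    ((by fun_prop : Continuous c).continuousOn).mul hwc
  have hTw := volterra_transport hKhwC1 hwC1 hx ht (c₁ := lam2) (c₂ := -lam1)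
    (g := fun _ => 0) continuousOn_const
    fun ξ hξ => by linarith [hwpde ξ ⟨hξ.1, hξ.2.trans hx.2⟩ t ht]
  have hTv := volterra_transport hKhvC1 hvC1 hx ht (c₁ := lam2) (c₂ := lam2) hcw
    fun ξ hξ => by linarith [hvpde ξ ⟨hξ.1, hξ.2.trans hx.2⟩ t ht]
  have hwres : ∫ ξ in (0:ℝ)..x,
        (lam2 * deriv (fun y => Khw y ξ) x - lam1 * deriv (fun s => Khw x s) ξ - c ξ * Khv x ξ)
          * w ξ t
      = (∫ ξ in (0:ℝ)..x,
          (lam2 * deriv (fun y => Khw y ξ) x + -lam1 * deriv (fun s => Khw x s) ξ) * w ξ t)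
        - ∫ ξ in (0:ℝ)..x, Khv x ξ * (c ξ * w ξ t) := by
    rw [← integral_sub ((((hKhwC1.intervalIntegrable_deriv_fst_triangle hx).const_mul lam2).add
      ((hKhwC1.intervalIntegrable_deriv_snd_triangle hx).const_mul (-lam1))).mul_continuousOn hwc)
      (hcw.intervalIntegrable.continuousOn_mul
        (continuousOn_kernel_slice hKhvC1.continuousOn (Ioo_subset_Icc_self hx)))]
    exact integral_congr fun ξ _ => by ring
  have hvres : ∫ ξ in (0:ℝ)..x,
        (lam2 * deriv (fun y => Khv y ξ) x + lam2 * deriv (fun s => Khv x s) ξ) * v ξ t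
      = lam2 * ∫ ξ in (0:ℝ)..x,
          (deriv (fun y => Khv y ξ) x + deriv (fun s => Khv x s) ξ) * v ξ t := by
    rw [← intervalIntegral.integral_const_mul]
    exact integral_congr fun ξ _ => by ring
  have hbc : lam1 * w 0 t = -(lam2 * v 0 t) := by
    rw [hbc0 t ht.le]
    field_simp
  simp only [mul_zero, intervalIntegral.integral_zero, add_zero] at hTw
  rw [hwres]
  linear_combination hvpde x hx t ht - hTw - hTv + hvres - Khw x 0 * hbc

/-- with arbitrary approximate kernels `K̂^w, K̂^v ∈ C¹(𝒯)` and the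
approximated control `Û`, the transformed states
`α̂(x,t) = w̃(x,t)`,
`β̂(x,t) = ṽ(x,t) − ∫₀^x K̂^w(x,ξ) w̃(ξ,t) dξ − ∫₀^x K̂^v(x,ξ) ṽ(ξ,t) dξ`
satisfy `∂_t α̂ + λ₁ ∂_x α̂ = 0`, `α̂(0,t) = −r β̂(0,t)`, `β̂(L,t) = 0`, and a
perturbed transport equation for `β̂` whose source terms are exactly the
residuals of the approximate kernels in the kernel equations. -/
theorem stmt_4 (L lam1 lam2 τ vs : ℝ)
    (hL : 0 < L) (h1 : 0 < lam1) (h2 : 0 < lam2) (hτ : 0 < τ) (hvs : 0 < vs)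
    -- the approximate kernels, C¹ on the triangle 𝒯
    (Khw Khv : ℝ → ℝ → ℝ)
    (hKhwC1 : ContDiffOn ℝ 1 (fun p : ℝ × ℝ => Khw p.1 p.2)
      {p : ℝ × ℝ | 0 ≤ p.2 ∧ p.2 ≤ p.1 ∧ p.1 ≤ L})
    (hKhvC1 : ContDiffOn ℝ 1 (fun p : ℝ × ℝ => Khv p.1 p.2)
      {p : ℝ × ℝ | 0 ≤ p.2 ∧ p.2 ≤ p.1 ∧ p.1 ≤ L})
    -- a C¹ solution (w̃, ṽ) of the plant with the approximated control
    (w v : ℝ → ℝ → ℝ) (U : ℝ → ℝ)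
    (hwC1 : ContDiffOn ℝ 1 (fun p : ℝ × ℝ => w p.1 p.2) (Icc 0 L ×ˢ Ici 0))
    (hvC1 : ContDiffOn ℝ 1 (fun p : ℝ × ℝ => v p.1 p.2) (Icc 0 L ×ˢ Ici 0))
    (hwpde : ∀ x ∈ Ioo (0:ℝ) L, ∀ t ∈ Ioi (0:ℝ),
      deriv (fun s => w x s) t + lam1 * deriv (fun y => w y t) x = 0)
    (hvpde : ∀ x ∈ Ioo (0:ℝ) L, ∀ t ∈ Ioi (0:ℝ),
      deriv (fun s => v x s) t - lam2 * deriv (fun y => v y t) x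
        = (-(1 / τ) * Real.exp (-x / (τ * vs))) * w x t)
    (hbc0 : ∀ t : ℝ, 0 ≤ t → w 0 t = -(lam2 / lam1) * v 0 t)
    (hbcL : ∀ t : ℝ, 0 ≤ t →
      v L t = Real.exp (-L / (τ * vs)) * w L t + U t)
    (hU : ∀ t : ℝ, 0 ≤ t →
      U t = -Real.exp (-L / (τ * vs)) * w L t
        + (∫ ξ in (0:ℝ)..L, Khw L ξ * w ξ t)
        + ∫ ξ in (0:ℝ)..L, Khv L ξ * v ξ t)
    -- the transformed states
    (αh βh : ℝ → ℝ → ℝ)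
    (hαdef : ∀ x t : ℝ, αh x t = w x t)
    (hβdef : ∀ x t : ℝ, βh x t = v x t
      - (∫ ξ in (0:ℝ)..x, Khw x ξ * w ξ t)
      - ∫ ξ in (0:ℝ)..x, Khv x ξ * v ξ t) :
    (∀ x ∈ Ioo (0:ℝ) L, ∀ t ∈ Ioi (0:ℝ),
      deriv (fun s => αh x s) t + lam1 * deriv (fun y => αh y t) x = 0) ∧
    (∀ t : ℝ, 0 ≤ t → αh 0 t = -(lam2 / lam1) * βh 0 t) ∧
    (∀ t : ℝ, 0 ≤ t → βh L t = 0) ∧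
    (∀ x ∈ Ioo (0:ℝ) L, ∀ t ∈ Ioi (0:ℝ),
      deriv (fun s => βh x s) t - lam2 * deriv (fun y => βh y t) x
        = ((-(1 / τ) * Real.exp (-x / (τ * vs))) + (lam1 + lam2) * Khw x x) * w x t
          + lam2 * (Khw x 0 + Khv x 0) * v 0 t
          + (∫ ξ in (0:ℝ)..x,
              (lam2 * deriv (fun y => Khw y ξ) x - lam1 * deriv (fun s => Khw x s) ξ
                - (-(1 / τ) * Real.exp (-ξ / (τ * vs))) * Khv x ξ) * w ξ t)
          + lam2 * ∫ ξ in (0:ℝ)..x,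
              (deriv (fun y => Khv y ξ) x + deriv (fun s => Khv x s) ξ) * v ξ t) :=
  stmt_4_general L lam1 lam2 τ vs h1 Khw Khv hKhwC1 hKhvC1 w v U hwC1 hvC1 hwpde hvpde hbc0 hbcL hU
    αh βh hαdef hβdef
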